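/- arXiv:1204.4925 — 2 statements merged into one kernel-verified Lean document; each statement's English description precedes it below -/
import Mathlib

section
/- Let A be a semisimple complex unital Banach algebra and let a, b ∈ A satisfy r(a·x) ≤ r(b·x) for all x ∈ A. If b is invertible, then there exists u in the center Z(A) of A such that r(u) ≤ 1 and a = u·b. -/
/-
Put `u = a b⁻¹`, so that `r(u z) ≤ r(z)` for every `z`; in particular `r(u) ≤ r(1) ≤ 1`.
Let `M = A ⧸ I` for a maximal left ideal `I`: a simple Banach `A`-module whose
`A`-endomorphisms are scalars (Schur and Gelfand–Mazur), so Jacobson density holds over `ℂ`. If `ξ` and `u ξ` were linearly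
independent, a product `S` of three unipotent units `exp c` would map `ξ ↦ u ξ / 2` and
`u ξ ↦ -2 ξ`, making `-4` an eigenvalue of `S⁻¹ u S u`; but
`r(S⁻¹ u S u) = r(u · S u S⁻¹) ≤ r(S u S⁻¹) = r(u) ≤ 1`. Hence `u` acts on every such `M` as a
scalar, every commutator `u x - x u` lies in the Jacobson radical, and semisimplicity gives
`u x = x u`.
-/

open NormedSpace

theorem spectrum.mem_of_smul_eq_smul {R A M : Type*} [CommSemiring R] [Ring A] [Algebra R A]
    [AddCommGroup M] [Module A M] [Module R M] [IsScalarTower R A M]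
    {a : A} {r : R} {m : M} (hm : m ≠ 0) (h : a • m = r • m) : r ∈ spectrum R a := by
  rintro ⟨v, hv⟩
  apply hm
  calc m = (↑v⁻¹ * ↑v : A) • m := by rw [Units.inv_mul, one_smul]
    _ = 0 := by rw [mul_smul, hv, sub_smul, algebraMap_smul, h, sub_self, smul_zero]

theorem isUnit_one_add_mul_of_mem_jacobson {R : Type*} [Ring R] {x : R}
    (hx : x ∈ Ring.jacobson R) (y : R) : IsUnit (1 + y * x) := by
  have hleft : ∀ y, ∃ z, z * (1 + y * x) = 1 := fun y ↦ by
    obtain ⟨z, hz⟩ := Ideal.mem_jacobson_iff.mp (Ideal.jacobson_bot (R := R) ▸ hx) y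
    rw [Submodule.mem_bot, sub_eq_zero] at hz
    exact ⟨z, by rw [mul_add, mul_one, ← mul_assoc, add_comm, hz]⟩
  obtain ⟨z, hz⟩ := hleft y
  obtain ⟨z', hz'⟩ := hleft (-(z * y))
  -- `z = 1 - z y x` is itself left invertible, so its right inverse `1 + y x` is a two-sided one
  have hzz' : z' * z = 1 := by
    calc z' * z = z' * (z * (1 + y * x) + -(z * y) * x) := by noncomm_ring
      _ = 1 := by rw [hz, hz']
  have hz'_eq : z' = 1 + y * x := by
    calc z' = z' * (z * (1 + y * x)) := by rw [hz, mul_one]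
      _ = 1 + y * x := by rw [← mul_assoc, hzz', one_mul]
  exact ⟨⟨1 + y * x, z, by rw [← hz'_eq, hzz'], hz⟩, rfl⟩

theorem spectrum_subset_singleton_zero_of_mem_jacobson {𝕜 A : Type*} [Field 𝕜] [Ring A]
    [Algebra 𝕜 A] {x : A} (hx : x ∈ Ring.jacobson A) : spectrum 𝕜 x ⊆ {0} := by
  intro μ hμ
  by_contra hμ0
  apply spectrum.mem_iff.mp hμ
  have : algebraMap 𝕜 A μ - x = algebraMap 𝕜 A μ * (1 + algebraMap 𝕜 A (-μ⁻¹) * x) := by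
    rw [mul_add, mul_one, ← mul_assoc, ← map_mul, mul_neg, mul_inv_cancel₀ hμ0, map_neg, map_one]
    noncomm_ring
  rw [this]
  exact ((isUnit_iff_ne_zero.mpr hμ0).map _).mul (isUnit_one_add_mul_of_mem_jacobson hx _)

theorem spectralRadius_units_conjugate {𝕜 A : Type*} [NormedField 𝕜] [Ring A] [Algebra 𝕜 A]
    (S : Aˣ) (a : A) : spectralRadius 𝕜 ((S : A) * a * ↑S⁻¹) = spectralRadius 𝕜 a := by
  rw [spectralRadius, spectrum.units_conjugate, spectralRadius]

theorem spectralRadius_le_one_of_spectralRadius_mul_le {𝕜 A : Type*} [NormedField 𝕜] [Ring A]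
    [Algebra 𝕜 A] {u : A} (hu : ∀ z, spectralRadius 𝕜 (u * z) ≤ spectralRadius 𝕜 z) :
    spectralRadius 𝕜 u ≤ 1 := by
  refine (mul_one u ▸ hu 1).trans ?_
  rcases subsingleton_or_nontrivial A with h | h <;> simp

instance Ideal.isSimpleModule_quotient_of_isMaximal {R : Type*} [Ring R] (I : Ideal R)
    [I.IsMaximal] : IsSimpleModule R (R ⧸ I) :=
  isSimpleModule_iff_isCoatom.mpr (Ideal.isMaximal_def.mp ‹_›)

theorem exists_smul_eq_zero_and_smul_eq {K A M : Type*} [Field K] [Ring A] [Algebra K A]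
    [AddCommGroup M] [Module A M] [Module K M] [IsScalarTower K A M] [IsSimpleModule A M]
    (hscalar : ∀ Φ : M →ₗ[A] M, ∃ μ : K, ∀ m, Φ m = μ • m) {η ξ : M}
    (hind : LinearIndependent K ![η, ξ]) (e : M) : ∃ c : A, c • η = 0 ∧ c • ξ = e := by
  classical
  have hξ : ξ ∉ K ∙ η := fun h ↦ by
    obtain ⟨a, rfl⟩ := Submodule.mem_span_singleton.mp h
    have := (LinearIndependent.pair_iff.mp hind a (-1) (by rw [neg_one_smul, add_neg_cancel])).2
    exact one_ne_zero (neg_eq_zero.mp this)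
  obtain ⟨f, hfξ, hfη⟩ := Submodule.exists_dual_map_eq_bot_of_notMem hξ inferInstance
  rw [Submodule.map_span, Set.image_singleton, Submodule.span_singleton_eq_bot] at hfη
  let g : M →ₗ[K] M := (f ξ)⁻¹ • f.smulRight e
  -- every `A`-endomorphism of `M` is a scalar, so the `K`-linear map `g` commutes with all of them
  let F : Module.End (Module.End A M) M :=
    { toFun := g
      map_add' := g.map_add
      map_smul' := fun Φ m ↦ by
        obtain ⟨μ, hμ⟩ := hscalar Φ
        simp only [Module.End.smul_def, hμ, map_smul, RingHom.id_apply] }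
  obtain ⟨c, hc⟩ := jacobson_density F {η, ξ}
  refine ⟨c, ?_, ?_⟩
  · rw [← hc η (by simp)]
    simp [F, g, hfη]
  · rw [← hc ξ (by simp)]
    simp [F, g, hfξ]

section BanachAlgebra

variable {A : Type*} [NormedRing A] [NormedAlgebra ℂ A] [CompleteSpace A]

theorem exp_smul_eq_add_smul {M : Type*} [AddCommGroup M] [Module A M] [TopologicalSpace M]
    [ContinuousSMul A M] [T2Space M] {c : A} {m : M} (h : c • c • m = 0) :
    exp c • m = m + c • m := by
  have hvanish : ∀ n ∉ ({0, 1} : Finset ℕ), ((n.factorial⁻¹ : ℂ) • c ^ n) • m = 0 := by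
    intro n hn
    simp only [Finset.mem_insert, Finset.mem_singleton, not_or] at hn
    obtain ⟨k, rfl⟩ : ∃ k, n = k + 2 := ⟨n - 2, by omega⟩
    rw [Algebra.smul_def, pow_add, pow_two, mul_smul, mul_smul, mul_smul, h, smul_zero, smul_zero]
  rw [(exp_series_hasSum_exp' (𝕂 := ℂ) c).smul_const m |>.unique
    (hasSum_sum_of_ne_finset_zero hvanish)]
  simp

theorem exists_eq_smul_of_linearMap_quotient (I : Ideal A) [I.IsMaximal]
    (Φ : (A ⧸ I) →ₗ[A] (A ⧸ I)) : ∃ μ : ℂ, ∀ m, Φ m = μ • m := by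
  have : Nontrivial (A ⧸ I) := IsSimpleModule.nontrivial A _
  have hcont : Continuous Φ := by
    rw [I.isQuotientMap_mkQ.continuous_iff]
    have : ⇑Φ ∘ I.mkQ = fun t ↦ t • Φ (I.mkQ 1) := funext fun t ↦ by
      rw [Function.comp_apply, ← map_smul, ← map_smul, smul_eq_mul, mul_one]
    rw [this]
    exact continuous_id.smul continuous_const
  obtain ⟨μ, hμ⟩ := spectrum.nonempty (⟨Φ.restrictScalars ℂ, hcont⟩ : (A ⧸ I) →L[ℂ] (A ⧸ I))
  refine ⟨μ, fun m ↦ ?_⟩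
  rcases LinearMap.bijective_or_eq_zero (Φ - μ • LinearMap.id) with hbij | hzero
  · refine absurd ?_ (spectrum.mem_iff.mp hμ)
    rw [ContinuousLinearMap.isUnit_iff_bijective]
    convert (Equiv.neg (A ⧸ I)).bijective.comp hbij using 1
    ext m
    exact (neg_sub _ _).symm
  · exact sub_eq_zero.mp (LinearMap.congr_fun hzero m)

theorem exists_unit_smul_eq_and_smul_eq_add (I : Ideal A) [I.IsMaximal] {η ξ : A ⧸ I}
    (hind : LinearIndependent ℂ ![η, ξ]) (γ : ℂ) :
    ∃ S : Aˣ, (S : A) • η = η ∧ (S : A) • ξ = ξ + γ • η := by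
  obtain ⟨c, hcη, hcξ⟩ :=
    exists_smul_eq_zero_and_smul_eq (exists_eq_smul_of_linearMap_quotient I) hind (γ • η)
  refine ⟨(isUnit_exp_of_mem_ball (𝕂 := ℂ) (x := c) ((expSeries_radius_eq_top ℂ A).symm ▸
    edist_lt_top _ _)).unit, ?_, ?_⟩
  · rw [IsUnit.unit_spec, exp_smul_eq_add_smul (by rw [hcη, smul_zero]), hcη, add_zero]
  · rw [IsUnit.unit_spec, exp_smul_eq_add_smul (by rw [hcξ, smul_comm, hcη, smul_zero]), hcξ]

theorem not_linearIndependent_smul_of_spectralRadius_mul_le {u : A}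
    (hu : ∀ z, spectralRadius ℂ (u * z) ≤ spectralRadius ℂ z) (I : Ideal A) [I.IsMaximal]
    (ξ : A ⧸ I) : ¬ LinearIndependent ℂ ![ξ, u • ξ] := by
  intro hind
  obtain ⟨T₁, hT₁ξ, hT₁uξ⟩ := exists_unit_smul_eq_and_smul_eq_add I hind (-2)
  obtain ⟨T₂, hT₂uξ, hT₂ξ⟩ :=
    exists_unit_smul_eq_and_smul_eq_add I (LinearIndependent.pair_symm_iff.mp hind) (1 / 2)
  set S := T₁ * T₂ * T₁
  have hSξ : (S : A) • ξ = (1 / 2 : ℂ) • u • ξ :=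
    calc (S : A) • ξ = (T₁ : A) • (T₂ : A) • (T₁ : A) • ξ := by
          simp only [S, Units.val_mul, mul_smul]
      _ = (T₁ : A) • (ξ + (1 / 2 : ℂ) • u • ξ) := by rw [hT₁ξ, hT₂ξ]
      _ = (1 / 2 : ℂ) • u • ξ := by
          rw [smul_add, smul_comm _ (1 / 2 : ℂ), hT₁ξ, hT₁uξ, smul_add, smul_smul]
          norm_num
  have hSuξ : (S : A) • u • ξ = (-2 : ℂ) • ξ :=
    calc (S : A) • u • ξ = (T₁ : A) • (T₂ : A) • (T₁ : A) • u • ξ := by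
          simp only [S, Units.val_mul, mul_smul]
      _ = (T₁ : A) • (u • ξ + (-2 : ℂ) • (ξ + (1 / 2 : ℂ) • u • ξ)) := by
          rw [hT₁uξ, smul_add, smul_comm _ (-2 : ℂ), hT₂ξ, hT₂uξ]
      _ = (T₁ : A) • (-2 : ℂ) • ξ := by
          rw [smul_add (-2 : ℂ), smul_smul]
          norm_num
      _ = (-2 : ℂ) • ξ := by rw [smul_comm, hT₁ξ]
  have hS'uξ : (↑S⁻¹ : A) • u • ξ = (2 : ℂ) • ξ := by
    calc (↑S⁻¹ : A) • u • ξ = (↑S⁻¹ : A) • (2 : ℂ) • (1 / 2 : ℂ) • u • ξ := by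
          rw [smul_smul (2 : ℂ)]; norm_num
      _ = (2 : ℂ) • ξ := by
          rw [← hSξ, smul_comm, ← mul_smul, Units.inv_mul, one_smul]
  have hw : (↑S⁻¹ * u * ↑S * u) • ξ = (-4 : ℂ) • ξ := by
    rw [mul_smul, mul_smul, mul_smul, hSuξ, smul_comm u, smul_comm _ (-2 : ℂ), hS'uξ, smul_smul]
    norm_num
  have hmem : (-4 : ℂ) ∈ spectrum ℂ (↑S⁻¹ * u * ↑S * u) :=
    spectrum.mem_of_smul_eq_smul (hind.ne_zero 0) hw
  have hle : spectralRadius ℂ (↑S⁻¹ * u * ↑S * u) ≤ 1 :=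
    calc spectralRadius ℂ (↑S⁻¹ * u * ↑S * u)
        = spectralRadius ℂ (u * ((S : A) * u * ↑S⁻¹)) := by
          rw [← spectralRadius_units_conjugate S]
          simp [mul_assoc]
      _ ≤ spectralRadius ℂ u := (hu _).trans_eq (spectralRadius_units_conjugate S u)
      _ ≤ 1 := spectralRadius_le_one_of_spectralRadius_mul_le hu
  exact hmem (spectrum.mem_resolventSet_of_spectralRadius_lt (hle.trans_lt (by norm_num)))

theorem exists_smul_eq_smul_of_spectralRadius_mul_le {u : A}
    (hu : ∀ z, spectralRadius ℂ (u * z) ≤ spectralRadius ℂ z) (I : Ideal A) [I.IsMaximal] :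
    ∃ μ : ℂ, ∀ ξ : A ⧸ I, u • ξ = μ • ξ := by
  obtain ⟨μ, hμ⟩ := LinearMap.exists_eq_smul_id_of_forall_notLinearIndependent
    (f := DistribSMul.toLinearMap ℂ (A ⧸ I) u)
    (not_linearIndependent_smul_of_spectralRadius_mul_le hu I)
  exact ⟨μ, fun ξ ↦ LinearMap.congr_fun hμ ξ⟩

theorem mul_sub_mul_mem_jacobson_of_spectralRadius_mul_le {u : A}
    (hu : ∀ z, spectralRadius ℂ (u * z) ≤ spectralRadius ℂ z) (x : A) :
    u * x - x * u ∈ Ring.jacobson A := by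
  rw [Ring.jacobson_eq_sInf_isMaximal, Submodule.mem_sInf]
  intro I (hI : Ideal.IsMaximal I)
  obtain ⟨μ, hμ⟩ := exists_smul_eq_smul_of_spectralRadius_mul_le hu I
  rw [← Submodule.Quotient.mk_eq_zero, ← mul_one (u * x - x * u), ← smul_eq_mul,
    Submodule.Quotient.mk_smul, sub_smul, mul_smul, mul_smul, hμ, hμ, smul_comm x μ, sub_self]

theorem eq_zero_of_mem_jacobson (hss : ∀ a : A, (∀ x : A, spectrum ℂ (a * x) = {0}) → a = 0)
    {c : A} (hc : c ∈ Ring.jacobson A) : c = 0 := by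
  nontriviality A
  exact hss c fun x ↦ (spectrum.nonempty _).subset_singleton_iff.mp
    (spectrum_subset_singleton_zero_of_mem_jacobson (Ideal.mul_mem_right x _ hc))

theorem mem_center_of_spectralRadius_mul_le
    (hss : ∀ a : A, (∀ x : A, spectrum ℂ (a * x) = {0}) → a = 0) {u : A}
    (hu : ∀ z, spectralRadius ℂ (u * z) ≤ spectralRadius ℂ z) : u ∈ Set.center A :=
  Semigroup.mem_center_iff.mpr fun x ↦ (sub_eq_zero.mp
    (eq_zero_of_mem_jacobson hss (mul_sub_mul_mem_jacobson_of_spectralRadius_mul_le hu x))).symm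

end BanachAlgebra

theorem exists_central_of_spectralRadius_le_of_invertible_general
    {A : Type*} [NormedRing A] [NormedAlgebra ℂ A] [CompleteSpace A]
    (hss : ∀ a : A, (∀ x : A, spectrum ℂ (a * x) = {0}) → a = 0)
    (a b : A)
    (h : ∀ x : A, spectralRadius ℂ (a * x) ≤ spectralRadius ℂ (b * x))
    (hb : IsUnit b) :
    ∃ u ∈ Set.center A, spectralRadius ℂ u ≤ 1 ∧ a = u * b := by
  obtain ⟨B, rfl⟩ := hb
  have hu : ∀ z, spectralRadius ℂ (a * ↑B⁻¹ * z) ≤ spectralRadius ℂ z := fun z ↦ by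
    simpa only [mul_assoc, Units.mul_inv_cancel_left] using h (↑B⁻¹ * z)
  refine ⟨a * ↑B⁻¹, ?_, ?_, ?_⟩
  · exact mem_center_of_spectralRadius_mul_le hss hu
  · exact spectralRadius_le_one_of_spectralRadius_mul_le hu
  · exact (Units.inv_mul_cancel_right a B).symm

/-- Theorem 3.1: In a semisimple complex unital Banach algebra, if
`r(a x) ≤ r(b x)` for all `x` and `b` is invertible, then `a = u b` for some
central element `u` with `r(u) ≤ 1`. -/
theorem exists_central_of_spectralRadius_le_of_invertible
    {A : Type*} [NormedRing A] [NormedAlgebra ℂ A] [CompleteSpace A] [NormOneClass A]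
    (hss : ∀ a : A, (∀ x : A, spectrum ℂ (a * x) = {0}) → a = 0)
    (a b : A)
    (h : ∀ x : A, spectralRadius ℂ (a * x) ≤ spectralRadius ℂ (b * x))
    (hb : IsUnit b) :
    ∃ u ∈ Set.center A, spectralRadius ℂ u ≤ 1 ∧ a = u * b :=
  exists_central_of_spectralRadius_le_of_invertible_general hss a b h hb
end

section
/- Let A be a prime unital C*-algebra and let a, b ∈ A be such that r(a·x) ≤ r(b·x) for all x ∈ A. If b is self-adjoint (b = b*), then a·b = b·a. -/
/-!
Conjugating `a` by the invertible elements `exp (t • b)`, which commute with `b`, preserves the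
hypothesis `r(a x) ≤ r(b x)`, because `r(x y) = r(y x)`. In a C⋆-algebra that hypothesis forces
`‖a‖ ≤ ‖b‖`: take `x = a⋆`, so `‖a‖² = r(a a⋆) ≤ r(b a⋆) ≤ ‖b‖ ‖a‖`. Hence the entire function
`t ↦ exp (-t b) a exp (t b)` is bounded, so constant by Liouville's theorem, and differentiating
`a exp (t b) = exp (t b) a` at `t = 0` gives `a b = b a`.
-/

open NormedSpace Set
open scoped ENNReal

section SpectralRadius

variable {𝕜 A : Type*} [NormedField 𝕜] [Ring A] [Algebra 𝕜 A]

theorem spectralRadius_mul_comm (a b : A) :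
    spectralRadius 𝕜 (a * b) = spectralRadius 𝕜 (b * a) := by
  suffices ∀ x y : A, spectralRadius 𝕜 (x * y) ≤ spectralRadius 𝕜 (y * x) from
    (this a b).antisymm (this b a)
  intro x y
  refine iSup₂_le fun k hk => ?_
  rcases eq_or_ne k 0 with rfl | hk0
  · simp
  · have hk' : k ∈ spectrum 𝕜 (y * x) \ {0} := by
      rw [← spectrum.nonzero_mul_comm]; exact ⟨hk, hk0⟩
    exact le_iSup₂ (f := fun k (_ : k ∈ spectrum 𝕜 (y * x)) => (‖k‖₊ : ℝ≥0∞)) k hk'.1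

theorem spectralRadius_conj_mul_le {a b u v : A}
    (h : ∀ x, spectralRadius 𝕜 (a * x) ≤ spectralRadius 𝕜 (b * x))
    (hvu : v * u = 1) (hbu : Commute b u) (x : A) :
    spectralRadius 𝕜 (v * a * u * x) ≤ spectralRadius 𝕜 (b * x) :=
  calc spectralRadius 𝕜 (v * a * u * x) = spectralRadius 𝕜 (a * (u * x * v)) := by
        rw [show v * a * u * x = v * (a * (u * x)) by simp only [mul_assoc],
          spectralRadius_mul_comm v, mul_assoc a]
    _ ≤ spectralRadius 𝕜 (b * (u * x * v)) := h _
    _ = spectralRadius 𝕜 (b * x) := by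
        rw [← mul_assoc, ← mul_assoc, hbu.eq, mul_assoc u b, mul_assoc u,
          spectralRadius_mul_comm u, mul_assoc, hvu, mul_one]

end SpectralRadius

theorem commute_of_forall_commute_exp_smul {𝕂 A : Type*} [RCLike 𝕂] [NormedRing A]
    [NormedAlgebra 𝕂 A] [CompleteSpace A] {a b : A} (h : ∀ t : 𝕂, Commute a (exp (t • b))) :
    Commute a b := by
  have hexp : HasDerivAt (fun t : 𝕂 => exp (t • b)) b 0 := by
    simpa using hasDerivAt_exp_smul_const b (0 : 𝕂)
  have hr := hexp.mul_const a
  simp only [← fun t => (h t).eq] at hr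
  exact hexp.const_mul a |>.unique hr

theorem commute_of_isBounded_range_exp_conj {A : Type*} [NormedRing A] [NormedAlgebra ℂ A]
    [CompleteSpace A] {a b : A}
    (hbdd : Bornology.IsBounded (range fun t : ℂ => exp (t • -b) * a * exp (t • b))) :
    Commute a b := by
  let _ : NormedAlgebra ℚ A := .restrictScalars ℚ ℂ A
  have hdiff : Differentiable ℂ fun t : ℂ => exp (t • -b) * a * exp (t • b) := by fun_prop
  refine commute_of_forall_commute_exp_smul (𝕂 := ℂ) fun t => ?_
  let _ := invertibleExp (t • b)
  have hconst := hdiff.apply_eq_apply_of_bounded hbdd t 0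
  simp only [smul_neg, ← invOf_exp, zero_smul, neg_zero, exp_zero, one_mul, mul_one, mul_assoc,
    invOf_mul_eq_iff_eq_mul_left] at hconst
  exact hconst

namespace CStarAlgebra

variable {A : Type*} [CStarAlgebra A]

theorem norm_le_of_forall_spectralRadius_mul_le {a b : A}
    (h : ∀ x, spectralRadius ℂ (a * x) ≤ spectralRadius ℂ (b * x)) : ‖a‖ ≤ ‖b‖ := by
  nontriviality A
  have hsq : ‖a‖₊ * ‖a‖₊ ≤ ‖b‖₊ * ‖a‖₊ := by
    have := calc
      ((‖a‖₊ * ‖a‖₊ : NNReal) : ℝ≥0∞) = spectralRadius ℂ (a * star a) := by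
          rw [(IsSelfAdjoint.mul_star_self a).spectralRadius_eq_nnnorm,
            CStarRing.nnnorm_self_mul_star]
      _ ≤ spectralRadius ℂ (b * star a) := h _
      _ ≤ ‖b * star a‖₊ := spectrum.spectralRadius_le_nnnorm _
      _ ≤ ((‖b‖₊ * ‖a‖₊ : NNReal) : ℝ≥0∞) := by
          rw [ENNReal.coe_le_coe, ← nnnorm_star a]; exact nnnorm_mul_le _ _
    exact_mod_cast this
  have hsq' : ‖a‖ * ‖a‖ ≤ ‖b‖ * ‖a‖ := by exact_mod_cast hsq
  nlinarith [norm_nonneg a, norm_nonneg b]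

theorem commute_of_forall_spectralRadius_mul_le {a b : A}
    (h : ∀ x, spectralRadius ℂ (a * x) ≤ spectralRadius ℂ (b * x)) : Commute a b := by
  let _ : NormedAlgebra ℚ A := .restrictScalars ℚ ℂ A
  refine commute_of_isBounded_range_exp_conj <| isBounded_iff_forall_norm_le.2 ⟨‖b‖, ?_⟩
  rintro - ⟨t, rfl⟩
  have hinv : exp (t • -b) * exp (t • b) = 1 := by
    let _ := invertibleExp (t • b)
    rw [smul_neg, ← invOf_exp, invOf_mul_self]
  exact norm_le_of_forall_spectralRadius_mul_le <|
    spectralRadius_conj_mul_le h hinv ((Commute.refl b).smul_right t).exp_right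

end CStarAlgebra

theorem commute_of_spectralRadius_le_selfAdjoint_general
    {A : Type*} [NormedRing A] [StarRing A] [CStarRing A] [CompleteSpace A]
    [NormedAlgebra ℂ A] [StarModule ℂ A]
    (a b : A)
    (h : ∀ x : A, spectralRadius ℂ (a * x) ≤ spectralRadius ℂ (b * x)) :
    a * b = b * a :=
  let _ : CStarAlgebra A := {}
  (CStarAlgebra.commute_of_forall_spectralRadius_mul_le h).eq

/-- Theorem 3.8, Claim 1: In a prime unital C*-algebra, if `r(a x) ≤ r(b x)`
for all `x` and `b` is self-adjoint, then `a b = b a`. -/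
theorem commute_of_spectralRadius_le_selfAdjoint
    {A : Type*} [NormedRing A] [StarRing A] [CStarRing A] [CompleteSpace A]
    [NormedAlgebra ℂ A] [StarModule ℂ A]
    (hprime : ∀ a b : A, (∀ x : A, a * x * b = 0) → a = 0 ∨ b = 0)
    (a b : A)
    (h : ∀ x : A, spectralRadius ℂ (a * x) ≤ spectralRadius ℂ (b * x))
    (hb : b = star b) :
    a * b = b * a :=
  commute_of_spectralRadius_le_selfAdjoint_general a b h
end
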